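/- (Vizing's Adjacency Lemma) Let G be a simple graph of Class 2 with maximum degree Δ. If e = xy is a critical edge of G, then x has at least Δ − d_G(y) + 1 neighbors of degree Δ in V(G) \ {y}. -/

import Mathlib

/-- A proper `k`-edge-coloring of `G` with colors from `{1, …, k}`: every edge of `G`
receives a color in `{1, …, k}` and distinct edges sharing a vertex get distinct colors. -/
def IsProperEdgeColoring {V : Type*} (G : SimpleGraph V) (k : ℕ) (φ : Sym2 V → ℕ) : Prop :=
  (∀ e ∈ G.edgeSet, φ e ∈ Finset.Icc 1 k) ∧
    ∀ e₁ ∈ G.edgeSet, ∀ e₂ ∈ G.edgeSet, e₁ ≠ e₂ → (∃ v, v ∈ e₁ ∧ v ∈ e₂) → φ e₁ ≠ φ e₂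

/-- The chromatic index `χ'(G)`: the least `k` such that `G` has a proper `k`-edge-coloring. -/
noncomputable def chromIndex {V : Type*} (G : SimpleGraph V) : ℕ :=
  sInf {k | ∃ φ : Sym2 V → ℕ, IsProperEdgeColoring G k φ}

/-- The set `φ̄(u)` of colors of `{1, …, k}` missing at `u`, i.e. not used by `φ` on
any edge of `G` incident with `u`. -/
def missing {V : Type*} (G : SimpleGraph V) (k : ℕ) (φ : Sym2 V → ℕ) (u : V) : Set ℕ :=
  {c | c ∈ Finset.Icc 1 k ∧ ∀ v, G.Adj u v → φ s(u, v) ≠ c}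

/-!
Let `φ` be a `Δ`-edge-coloring of `G - xy`; it exists because `xy` is critical, while `G` itself
has none. The fan at `x` rooted at `y` consists of the vertices reachable from `y` by steps
`u → w` such that the color of `xw` is missing at `u`. Shifting the colors along a fan shows that
no fan vertex misses a color missing at `x`, and a Kempe chain argument shows that distinct fan
vertices miss disjoint sets of colors. Every color missing at a fan vertex is therefore the color
of an edge from `x` to a fan vertex other than `y`, so the fan `S` satisfies
`∑_{u ∈ S} |φ̄(u)| ≤ |S| - 1`. Since `y` misses at least `Δ - d(y) + 1` colors and every fan vertex
of degree less than `Δ` misses at least one, at least `Δ - d(y) + 1` fan vertices other than `y`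
have degree `Δ`, and all of them are neighbors of `x`.
-/

open SimpleGraph Finset

namespace List

lemma IsChain.imp_of_mem_dropLast_imp {α : Type*} {R S : α → α → Prop} {l : List α}
    (H : ∀ a b, a ∈ l.dropLast → R a b → S a b) (h : l.IsChain R) : l.IsChain S := by
  rw [isChain_iff_forall_rel_of_append_cons_cons] at h ⊢
  rintro a b l₁ l₂ rfl
  exact H a b (by simp [dropLast_append_of_ne_nil]) (h rfl)

end List

namespace Equiv

lemma swap_apply_mem_iff {α : Type*} [DecidableEq α] {s : Set α} {a b c : α} (ha : a ∈ s)
    (hb : b ∈ s) : swap a b c ∈ s ↔ c ∈ s := by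
  rw [swap_apply_def]
  split_ifs with h₁ h₂ <;> simp_all

end Equiv

lemma le_card_filter_erase_of_sum_le {ι : Type*} [DecidableEq ι] {S : Finset ι} {i₀ : ι}
    (hi₀ : i₀ ∈ S) (f : ι → ℕ) (P : ι → Prop) [DecidablePred P] (hsum : ∑ i ∈ S, f i ≤ #S - 1)
    (hf : ∀ i ∈ S.erase i₀, ¬ P i → 1 ≤ f i) : f i₀ ≤ #((S.erase i₀).filter P) := by
  have hsplit := add_sum_erase S f hi₀
  have hnotP : #((S.erase i₀).filter (¬ P ·)) ≤ ∑ i ∈ S.erase i₀, f i :=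
    calc #((S.erase i₀).filter (¬ P ·))
        = ∑ i ∈ (S.erase i₀).filter (¬ P ·), 1 := card_eq_sum_ones _
      _ ≤ ∑ i ∈ (S.erase i₀).filter (¬ P ·), f i :=
        sum_le_sum fun i hi => hf i (mem_filter.1 hi).1 (mem_filter.1 hi).2
      _ ≤ ∑ i ∈ S.erase i₀, f i := sum_le_sum_of_subset (filter_subset _ _)
  have hcard := card_filter_add_card_filter_not (s := S.erase i₀) P
  have herase := card_erase_of_mem hi₀
  omega

namespace SimpleGraph

lemma degree_deleteEdges_lt {V : Type*} {G : SimpleGraph V} {e : Sym2 V} (he : e ∈ G.edgeSet)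
    {v : V} (hv : v ∈ e) [Fintype (G.neighborSet v)] [Fintype ((G.deleteEdges {e}).neighborSet v)] :
    (G.deleteEdges {e}).degree v < G.degree v := by
  obtain ⟨w, rfl⟩ := Sym2.mem_iff_exists.1 hv
  simp_rw [← card_neighborSet_eq_degree]
  exact Set.card_lt_card ⟨fun u hu => G.deleteEdges_le _ hu, fun h => by simpa using h he⟩

variable {W : Type*} [Fintype W] {K : SimpleGraph W} [DecidableRel K.Adj]

/-- Handshake lemma together with `|E| ≥ |V| - 1`. -/
lemma Connected.eq_or_eq_or_eq_of_degree_le_one (hK : K.Connected) (hdeg : ∀ v, K.degree v ≤ 2)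
    {a b c : W} (ha : K.degree a ≤ 1) (hb : K.degree b ≤ 1) (hc : K.degree c ≤ 1) :
    a = b ∨ a = c ∨ b = c := by
  classical
  by_contra! h
  set S : Finset W := {a, b, c}
  have hcard : #S = 3 := by
    rw [card_insert_of_notMem (by simp [h.1, h.2.1]), card_pair h.2.2]
  have hle : ∀ v, K.degree v + (if v ∈ S then 1 else 0) ≤ 2 := by
    intro v
    split_ifs with hv
    · simp only [S, mem_insert, mem_singleton] at hv
      rcases hv with rfl | rfl | rfl <;> omega
    · exact (add_zero _).trans_le (hdeg v)
  have hsum : ∑ v, K.degree v + 3 ≤ 2 * Fintype.card W :=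
    calc ∑ v, K.degree v + 3 = ∑ v, (K.degree v + if v ∈ S then 1 else 0) := by
          simp [sum_add_distrib, hcard]
      _ ≤ ∑ _v : W, 2 := sum_le_sum fun v _ => hle v
      _ = 2 * Fintype.card W := by simp [mul_comm]
  have hedges := hK.card_vert_le_card_edgeSet_add_one
  rw [Nat.card_eq_fintype_card, Nat.card_eq_fintype_card, ← edgeFinset_card] at hedges
  have := K.sum_degrees_eq_twice_card_edges
  omega

lemma eq_or_eq_or_eq_of_reachable_of_degree_le_one (hdeg : ∀ v, K.degree v ≤ 2) {a b c : W}
    (ha : K.degree a ≤ 1) (hb : K.degree b ≤ 1) (hc : K.degree c ≤ 1)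
    (hab : K.Reachable a b) (hac : K.Reachable a c) : a = b ∨ a = c ∨ b = c := by
  classical
  set C := K.connectedComponentMk a
  have hconn : (K.induce C.supp).Connected := C.connected_toSimpleGraph
  have hdegC (v : C.supp) : (K.induce C.supp).degree v = K.degree v :=
    degree_induce_of_neighborSet_subset fun w hw => (C.mem_supp_congr_adj hw).1 v.2
  have := hconn.eq_or_eq_or_eq_of_degree_le_one (fun v => (hdegC v).trans_le (hdeg v))
    (a := ⟨a, rfl⟩) (b := ⟨b, ConnectedComponent.eq.2 hab.symm⟩)
    (c := ⟨c, ConnectedComponent.eq.2 hac.symm⟩)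
    ((hdegC _).trans_le ha) ((hdegC _).trans_le hb) ((hdegC _).trans_le hc)
  simpa [Subtype.ext_iff] using this

end SimpleGraph

section EdgeColoring

variable {V : Type*} {G H : SimpleGraph V} {k : ℕ} {φ : Sym2 V → ℕ}

lemma isProperEdgeColoring_iff :
    IsProperEdgeColoring G k φ ↔ (∀ e ∈ G.edgeSet, φ e ∈ Icc 1 k) ∧
      ∀ ⦃u v w⦄, G.Adj u v → G.Adj u w → v ≠ w → φ s(u, v) ≠ φ s(u, w) := by
  refine and_congr_right fun _ => ⟨fun h u v w hv hw hvw => ?_, fun h => ?_⟩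
  · refine h _ hv _ hw (fun he => hvw (Sym2.congr_right.1 he)) ⟨u, ?_, ?_⟩ <;> simp
  · rintro e₁ he₁ e₂ he₂ hne ⟨u, hu₁, hu₂⟩
    obtain ⟨v, rfl⟩ := Sym2.mem_iff_exists.1 hu₁
    obtain ⟨w, rfl⟩ := Sym2.mem_iff_exists.1 hu₂
    exact h he₁ he₂ fun hvw => hne (hvw ▸ rfl)

lemma IsProperEdgeColoring.ne_of_adj (hφ : IsProperEdgeColoring G k φ) {u v w : V}
    (hv : G.Adj u v) (hw : G.Adj u w) (hvw : v ≠ w) : φ s(u, v) ≠ φ s(u, w) :=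
  (isProperEdgeColoring_iff.1 hφ).2 hv hw hvw

lemma IsProperEdgeColoring.mono {k' : ℕ} (hφ : IsProperEdgeColoring G k φ) (hk : k ≤ k') :
    IsProperEdgeColoring G k' φ :=
  ⟨fun e he => Icc_subset_Icc le_rfl hk (hφ.1 e he), hφ.2⟩

lemma IsProperEdgeColoring.anti (hφ : IsProperEdgeColoring G k φ) (hle : H ≤ G) :
    IsProperEdgeColoring H k φ :=
  ⟨fun e he => hφ.1 e (edgeSet_mono hle he),
    fun e₁ he₁ e₂ he₂ => hφ.2 e₁ (edgeSet_mono hle he₁) e₂ (edgeSet_mono hle he₂)⟩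

lemma exists_isProperEdgeColoring [Finite V] (G : SimpleGraph V) :
    ∃ k φ, IsProperEdgeColoring G k φ := by
  obtain ⟨n, ⟨f⟩⟩ := Finite.exists_equiv_fin (Sym2 V)
  refine ⟨n, fun e => f e + 1, fun e _ => ?_, fun e₁ _ e₂ _ hne _ h => hne (f.injective ?_)⟩
  · simp [Nat.succ_le_of_lt (f e).is_lt]
  · exact Fin.val_injective (Nat.succ_injective h)

lemma exists_isProperEdgeColoring_chromIndex [Finite V] (G : SimpleGraph V) :
    ∃ φ, IsProperEdgeColoring G (chromIndex G) φ :=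
  Nat.sInf_mem (exists_isProperEdgeColoring G)

lemma chromIndex_le (hφ : IsProperEdgeColoring G k φ) : chromIndex G ≤ k :=
  Nat.sInf_le ⟨φ, hφ⟩

lemma missing_anti (hle : H ≤ G) (u : V) : missing G k φ u ⊆ missing H k φ u :=
  fun _ hc => ⟨hc.1, fun v hv => hc.2 v (hle hv)⟩

open Classical in
noncomputable def missingFinset (G : SimpleGraph V) (k : ℕ) (φ : Sym2 V → ℕ) (u : V) :
    Finset ℕ :=
  (Icc 1 k).filter (· ∈ missing G k φ u)

@[simp]
lemma mem_missingFinset {u : V} {c : ℕ} : c ∈ missingFinset G k φ u ↔ c ∈ missing G k φ u := by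
  classical
  simp only [missingFinset, mem_filter, and_iff_right_iff_imp]
  exact fun h => h.1

lemma sub_degree_le_card_missingFinset (G : SimpleGraph V) (k : ℕ) (φ : Sym2 V → ℕ) (u : V)
    [Fintype (G.neighborSet u)] : k - G.degree u ≤ #(missingFinset G k φ u) := by
  classical
  have hsub : Icc 1 k \ (G.neighborFinset u).image (fun v => φ s(u, v)) ⊆ missingFinset G k φ u :=
    fun c hc => by
      simp only [mem_sdiff, mem_image, mem_neighborFinset, not_exists, not_and] at hc
      exact mem_missingFinset.2 ⟨hc.1, fun v hv he => hc.2 v hv he⟩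
  calc k - G.degree u
      ≤ #(Icc 1 k) - #((G.neighborFinset u).image fun v => φ s(u, v)) := by
        simpa using
          Nat.sub_le_sub_left (card_image_le.trans (card_neighborFinset_eq_degree G u).le) k
    _ ≤ #(Icc 1 k \ (G.neighborFinset u).image fun v => φ s(u, v)) := le_card_sdiff _ _
    _ ≤ _ := card_le_card hsub

lemma nonempty_missingFinset_of_degree_lt {u : V} [Fintype (G.neighborSet u)]
    (hu : G.degree u < k) : (missingFinset G k φ u).Nonempty := by
  have := sub_degree_le_card_missingFinset G k φ u
  rw [← card_pos]
  omega

lemma sub_degree_add_one_le_card_missingFinset {x y : V} (hxy : G.Adj x y)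
    [Fintype (G.neighborSet y)] [Fintype ((G.deleteEdges {s(x, y)}).neighborSet y)]
    (hy : G.degree y ≤ k) :
    k - G.degree y + 1 ≤ #(missingFinset (G.deleteEdges {s(x, y)}) k φ y) := by
  have := sub_degree_le_card_missingFinset (G.deleteEdges {s(x, y)}) k φ y
  have := degree_deleteEdges_lt hxy (Sym2.mem_mk_right x y)
  omega

end EdgeColoring

section Recoloring

variable {V : Type*} [DecidableEq V] {G : SimpleGraph V} {k : ℕ} {φ : Sym2 V → ℕ}

lemma mem_missing_update {e : Sym2 V} {u : V} {c d : ℕ}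
    (hc : c ∈ missing (G.deleteEdges {e}) k φ u) (hd : u ∈ e → d ≠ c) :
    c ∈ missing G k (Function.update φ e d) u := by
  refine ⟨hc.1, fun v hv => ?_⟩
  by_cases hve : s(u, v) = e
  · rw [hve, Function.update_self]
    exact hd (hve ▸ Sym2.mem_mk_left u v)
  · rw [Function.update_of_ne hve]
    exact hc.2 v (by simp [hv, hve])

lemma IsProperEdgeColoring.update_of_mem_missing {a b : V} {c : ℕ}
    (hφ : IsProperEdgeColoring (G.deleteEdges {s(a, b)}) k φ)
    (ha : c ∈ missing (G.deleteEdges {s(a, b)}) k φ a)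
    (hb : c ∈ missing (G.deleteEdges {s(a, b)}) k φ b) :
    IsProperEdgeColoring G k (Function.update φ s(a, b) c) := by
  have hφ' := isProperEdgeColoring_iff.1 hφ
  have hne_c : ∀ ⦃u w⦄, u ∈ s(a, b) → G.Adj u w → s(u, w) ≠ s(a, b) → φ s(u, w) ≠ c := by
    intro u w hu huw hne
    have huw' : (G.deleteEdges {s(a, b)}).Adj u w := by simp [huw, hne]
    rcases Sym2.mem_iff.1 hu with rfl | rfl
    exacts [ha.2 w huw', hb.2 w huw']
  refine isProperEdgeColoring_iff.2 ⟨fun e he => ?_, fun u v w hv hw hvw => ?_⟩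
  · by_cases h : e = s(a, b)
    · subst h; simpa using ha.1
    · rw [Function.update_of_ne h]; exact hφ.1 e (by simp [he, h])
  · by_cases hve : s(u, v) = s(a, b) <;> by_cases hwe : s(u, w) = s(a, b)
    · exact absurd (Sym2.congr_right.1 (hve.trans hwe.symm)) hvw
    · rw [hve, Function.update_self, Function.update_of_ne hwe]
      exact (hne_c (hve ▸ Sym2.mem_mk_left u v) hw hwe).symm
    · rw [hwe, Function.update_self, Function.update_of_ne hve]
      exact hne_c (hwe ▸ Sym2.mem_mk_left u w) hv hve
    · rw [Function.update_of_ne hve, Function.update_of_ne hwe]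
      exact hφ'.2 (by simp [hv, hve]) (by simp [hw, hwe]) hvw

/-- Moves the uncolored edge from `xa` to `xb`. -/
lemma IsProperEdgeColoring.shift {x a b : V}
    (hφ : IsProperEdgeColoring (G.deleteEdges {s(x, a)}) k φ)
    (hxb : (G.deleteEdges {s(x, a)}).Adj x b)
    (hb : φ s(x, b) ∈ missing (G.deleteEdges {s(x, a)}) k φ a) :
    IsProperEdgeColoring (G.deleteEdges {s(x, b)}) k (Function.update φ s(x, a) (φ s(x, b))) := by
  have hle : ((G.deleteEdges {s(x, b)}).deleteEdges {s(x, a)}) ≤ G.deleteEdges {s(x, a)} :=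
    fun u v huv => by simp_all
  refine (hφ.anti hle).update_of_mem_missing ⟨hφ.1 _ hxb, fun v hv => ?_⟩ (missing_anti hle a hb)
  have hvb : v ≠ b := by rintro rfl; simp at hv
  exact hφ.ne_of_adj (hle hv) hxb hvb

end Recoloring

section Kempe

variable {V : Type*} {H : SimpleGraph V} {k : ℕ} {φ : Sym2 V → ℕ} {α δ : ℕ} {z u : V}

/-- Its components are the `αδ`-Kempe chains of `φ`. -/
def kempeGraph (H : SimpleGraph V) (φ : Sym2 V → ℕ) (α δ : ℕ) : SimpleGraph V :=
  fromEdgeSet (H.edgeSet ∩ φ ⁻¹' {α, δ})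

lemma kempeGraph_adj {v : V} :
    (kempeGraph H φ α δ).Adj u v ↔ H.Adj u v ∧ (φ s(u, v) = α ∨ φ s(u, v) = δ) := by
  simp only [kempeGraph, fromEdgeSet_adj, Set.mem_inter_iff, mem_edgeSet, Set.mem_preimage,
    Set.mem_insert_iff, Set.mem_singleton_iff]
  exact ⟨fun h => h.1, fun h => ⟨h, h.1.ne⟩⟩

open Classical in
/-- Swaps `α` and `δ` on the Kempe chain through `z`; `Equiv.swap α δ` fixes the other colors
of that component. -/
noncomputable def kempeSwap (H : SimpleGraph V) (φ : Sym2 V → ℕ) (α δ : ℕ) (z : V) :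
    Sym2 V → ℕ :=
  fun e => if ∀ v ∈ e, (kempeGraph H φ α δ).Reachable z v then Equiv.swap α δ (φ e) else φ e

lemma kempeSwap_of_reachable {w : V} (hu : (kempeGraph H φ α δ).Reachable z u) (huw : H.Adj u w) :
    kempeSwap H φ α δ z s(u, w) = Equiv.swap α δ (φ s(u, w)) := by
  by_cases hw : (kempeGraph H φ α δ).Reachable z w
  · rw [kempeSwap, if_pos]
    simp [hu, hw]
  · rw [kempeSwap, if_neg (fun h => hw (h w (Sym2.mem_mk_right u w))), eq_comm]
    refine Equiv.swap_apply_of_ne_of_ne ?_ ?_ <;> intro hc <;>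
      exact hw (hu.trans (kempeGraph_adj.2 ⟨huw, by simp [hc]⟩).reachable)

lemma kempeSwap_of_not_reachable (w : V) (hu : ¬ (kempeGraph H φ α δ).Reachable z u) :
    kempeSwap H φ α δ z s(u, w) = φ s(u, w) :=
  if_neg fun h => hu (h u (Sym2.mem_mk_left u w))

lemma mem_missing_kempeSwap_iff (hu : (kempeGraph H φ α δ).Reachable z u)
    (hα : α ∈ Icc 1 k) (hδ : δ ∈ Icc 1 k) {c : ℕ} :
    c ∈ missing H k (kempeSwap H φ α δ z) u ↔ Equiv.swap α δ c ∈ missing H k φ u := by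
  refine and_congr (Equiv.swap_apply_mem_iff (s := (Icc 1 k : Set ℕ)) hα hδ).symm
    (forall_congr' fun w => imp_congr_right fun huw => ?_)
  rw [kempeSwap_of_reachable hu huw, Ne, Ne, Equiv.swap_apply_eq_iff]

lemma missing_kempeSwap_of_not_reachable (hu : ¬ (kempeGraph H φ α δ).Reachable z u) :
    missing H k (kempeSwap H φ α δ z) u = missing H k φ u := by
  simp only [missing, kempeSwap_of_not_reachable _ hu]

lemma IsProperEdgeColoring.kempeSwap (hφ : IsProperEdgeColoring H k φ) (hα : α ∈ Icc 1 k)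
    (hδ : δ ∈ Icc 1 k) : IsProperEdgeColoring H k (kempeSwap H φ α δ z) := by
  refine isProperEdgeColoring_iff.2 ⟨fun e he => ?_, fun u v w hv hw hvw => ?_⟩
  · induction e using Sym2.ind with
    | _ u w =>
      by_cases hu : (kempeGraph H φ α δ).Reachable z u
      · rw [kempeSwap_of_reachable hu he]
        exact (Equiv.swap_apply_mem_iff (s := (Icc 1 k : Set ℕ)) hα hδ).2 (hφ.1 _ he)
      · rw [kempeSwap_of_not_reachable w hu]
        exact hφ.1 _ he
  · by_cases hu : (kempeGraph H φ α δ).Reachable z u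
    · rw [kempeSwap_of_reachable hu hv, kempeSwap_of_reachable hu hw]
      exact (Equiv.injective _).ne (hφ.ne_of_adj hv hw hvw)
    · rw [kempeSwap_of_not_reachable v hu, kempeSwap_of_not_reachable w hu]
      exact hφ.ne_of_adj hv hw hvw

lemma IsProperEdgeColoring.degree_kempeGraph_le (hφ : IsProperEdgeColoring H k φ) (u : V)
    [Fintype ((kempeGraph H φ α δ).neighborSet u)] {t : Finset ℕ}
    (ht : ∀ w, (kempeGraph H φ α δ).Adj u w → φ s(u, w) ∈ t) :
    (kempeGraph H φ α δ).degree u ≤ #t := by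
  rw [← card_neighborFinset_eq_degree]
  refine card_le_card_of_injOn (fun w => φ s(u, w)) (fun w hw => ht w (by simpa using hw)) ?_
  intro w₁ hw₁ w₂ hw₂ h
  by_contra hne
  exact hφ.ne_of_adj (kempeGraph_adj.1 (by simpa using hw₁)).1
    (kempeGraph_adj.1 (by simpa using hw₂)).1 hne h

lemma IsProperEdgeColoring.degree_kempeGraph_le_two (hφ : IsProperEdgeColoring H k φ) (u : V)
    [Fintype ((kempeGraph H φ α δ).neighborSet u)] : (kempeGraph H φ α δ).degree u ≤ 2 :=
  (hφ.degree_kempeGraph_le u (t := {α, δ}) fun _ h => by simpa using (kempeGraph_adj.1 h).2).trans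
    card_le_two

lemma IsProperEdgeColoring.degree_kempeGraph_le_one_of_left (hφ : IsProperEdgeColoring H k φ)
    [Fintype ((kempeGraph H φ α δ).neighborSet u)] (hα : α ∈ missing H k φ u) :
    (kempeGraph H φ α δ).degree u ≤ 1 :=
  hφ.degree_kempeGraph_le u (t := {δ}) fun _ h =>
    mem_singleton.2 ((kempeGraph_adj.1 h).2.resolve_left (hα.2 _ (kempeGraph_adj.1 h).1))

lemma IsProperEdgeColoring.degree_kempeGraph_le_one_of_right (hφ : IsProperEdgeColoring H k φ)
    [Fintype ((kempeGraph H φ α δ).neighborSet u)] (hδ : δ ∈ missing H k φ u) :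
    (kempeGraph H φ α δ).degree u ≤ 1 :=
  hφ.degree_kempeGraph_le u (t := {α}) fun _ h =>
    mem_singleton.2 ((kempeGraph_adj.1 h).2.resolve_right (hδ.2 _ (kempeGraph_adj.1 h).1))

end Kempe

section Fan

variable {V : Type*} {G H : SimpleGraph V} {k : ℕ} {x y u : V} {φ : Sym2 V → ℕ} {l : List V}

def FanStep (H : SimpleGraph V) (k : ℕ) (x : V) (φ : Sym2 V → ℕ) (u w : V) : Prop :=
  H.Adj x w ∧ φ s(x, w) ∈ missing H k φ u

/-- A Vizing fan at `x` for a coloring of `H = G - xy`, listed from its root `y`. -/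
structure IsFanSeq (H : SimpleGraph V) (k : ℕ) (x y : V) (φ : Sym2 V → ℕ) (l : List V) :
    Prop where
  head? : l.head? = some y
  nodup : l.Nodup
  isChain : l.IsChain (FanStep H k x φ)

lemma adj_of_mem_tail_of_isChain_fanStep (hl : l.IsChain (FanStep H k x φ)) {w : V}
    (hw : w ∈ l.tail) : H.Adj x w := by
  induction hl with
  | nil | singleton => simp at hw
  | cons_cons hstep _ ih =>
    rcases List.mem_cons.1 hw with rfl | hw
    exacts [hstep.1, ih hw]

lemma missing_subset_missing_shift [DecidableEq V] {a b : V} {L : List V}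
    (hl : IsFanSeq (G.deleteEdges {s(x, a)}) k x a φ (a :: b :: L)) :
    ∀ u ∈ x :: b :: L, missing (G.deleteEdges {s(x, a)}) k φ u ⊆
      missing (G.deleteEdges {s(x, b)}) k (Function.update φ s(x, a) (φ s(x, b))) u := by
  have hxb : (G.deleteEdges {s(x, a)}).Adj x b := hl.isChain.rel.1
  have hle : (G.deleteEdges {s(x, b)}).deleteEdges {s(x, a)} ≤ G.deleteEdges {s(x, a)} :=
    fun u v huv => by simp_all
  intro u hu c hc
  refine mem_missing_update (missing_anti hle u hc) fun hux => ?_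
  rcases List.mem_cons.1 hu with rfl | hu
  · exact hc.2 b hxb
  have hna : a ∉ b :: L := (List.nodup_cons.1 hl.nodup).1
  have hxu : G.Adj x u := by
    rcases List.mem_cons.1 hu with rfl | hu
    exacts [G.deleteEdges_le _ hxb,
      G.deleteEdges_le _ (adj_of_mem_tail_of_isChain_fanStep hl.isChain.tail hu)]
  rcases Sym2.mem_iff.1 hux with rfl | rfl
  exacts [absurd rfl hxu.ne, absurd hu hna]

lemma IsFanSeq.shift [DecidableEq V] {a b : V} {L : List V}
    (hl : IsFanSeq (G.deleteEdges {s(x, a)}) k x a φ (a :: b :: L)) :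
    IsFanSeq (G.deleteEdges {s(x, b)}) k x b (Function.update φ s(x, a) (φ s(x, b))) (b :: L) := by
  have hna : a ∉ b :: L := (List.nodup_cons.1 hl.nodup).1
  have hnb : b ∉ L := (List.nodup_cons.1 (List.nodup_cons.1 hl.nodup).2).1
  refine ⟨rfl, hl.nodup.of_cons, hl.isChain.tail.imp_of_mem_tail_imp fun u v hu hv huv => ⟨?_, ?_⟩⟩
  · have hvb : v ≠ b := by rintro rfl; exact hnb hv
    exact deleteEdges_adj.2 ⟨G.deleteEdges_le _ huv.1, fun h => hvb (Sym2.congr_right.1 h)⟩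
  · have hva : v ≠ a := by rintro rfl; exact hna (List.mem_cons_of_mem _ hv)
    rw [Function.update_of_ne fun h => hva (Sym2.congr_right.1 h)]
    exact missing_subset_missing_shift hl u (List.mem_cons_of_mem _ hu) huv.2

/-- Shift the colors along the fan, then color the last fan edge. -/
theorem exists_isProperEdgeColoring_of_isFanSeq [DecidableEq V] {c : ℕ} :
    ∀ {l : List V} {a z : V} {φ : Sym2 V → ℕ},
      IsProperEdgeColoring (G.deleteEdges {s(x, a)}) k φ →
      IsFanSeq (G.deleteEdges {s(x, a)}) k x a φ l → l.getLast? = some z →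
      c ∈ missing (G.deleteEdges {s(x, a)}) k φ x →
      c ∈ missing (G.deleteEdges {s(x, a)}) k φ z → ∃ ψ, IsProperEdgeColoring G k ψ
  | [], _, _, _, _, hl, _, _, _ => by simpa using hl.head?
  | [a'], a, z, φ, hφ, hl, hz, hcx, hcz => by
    obtain rfl : a = a' := by simpa using hl.head?.symm
    obtain rfl : z = a := by simpa using hz.symm
    exact ⟨_, hφ.update_of_mem_missing hcx hcz⟩
  | a' :: b :: L, a, z, φ, hφ, hl, hz, hcx, hcz => by
    obtain rfl : a = a' := by simpa using hl.head?.symm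
    have hxb : (G.deleteEdges {s(x, a)}).Adj x b := hl.isChain.rel.1
    have hz' : (b :: L).getLast? = some z := by simpa using hz
    exact exists_isProperEdgeColoring_of_isFanSeq (hφ.shift hxb hl.isChain.rel.2) hl.shift hz'
      (missing_subset_missing_shift hl x List.mem_cons_self hcx)
      (missing_subset_missing_shift hl z (.tail _ (List.mem_of_getLast? hz')) hcz)

def IsFanVertex (H : SimpleGraph V) (k : ℕ) (x y : V) (φ : Sym2 V → ℕ) (w : V) : Prop :=
  ∃ l, IsFanSeq H k x y φ l ∧ l.getLast? = some w

lemma IsFanSeq.prefix (hl : IsFanSeq H k x y φ l) {l' : List V} (h : l' <+: l) (hne : l' ≠ []) :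
    IsFanSeq H k x y φ l' := by
  obtain ⟨t, rfl⟩ := h
  exact ⟨by simpa [List.head?_append, hne] using hl.head?, hl.nodup.of_append_left,
    hl.isChain.left_of_append⟩

lemma IsFanSeq.isFanVertex_of_mem (hl : IsFanSeq H k x y φ l) {p : V} (hp : p ∈ l) :
    IsFanVertex H k x y φ p := by
  obtain ⟨A, B, rfl⟩ := List.append_of_mem hp
  exact ⟨A ++ [p], hl.prefix (by simp) (by simp), by simp⟩

lemma isFanVertex_root : IsFanVertex H k x y φ y :=
  ⟨[y], ⟨rfl, List.nodup_singleton y, List.isChain_singleton y⟩, rfl⟩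

lemma exists_isFanSeq_forall_mem_dropLast_not (P : V → Prop)
    (h : ∃ w, IsFanVertex H k x y φ w ∧ P w) :
    ∃ l w, IsFanSeq H k x y φ l ∧ l.getLast? = some w ∧ P w ∧ ∀ p ∈ l.dropLast, ¬ P p := by
  classical
  have hex : ∃ n, ∃ l w, IsFanSeq H k x y φ l ∧ l.getLast? = some w ∧ P w ∧ l.length = n :=
    let ⟨w, ⟨l, hl, hw⟩, hPw⟩ := h
    ⟨_, l, w, hl, hw, hPw, rfl⟩
  obtain ⟨l, w, hl, hw, hPw, hlen⟩ := Nat.find_spec hex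
  refine ⟨l, w, hl, hw, hPw, fun p hp hPp => ?_⟩
  obtain ⟨A, B, hAB⟩ := List.append_of_mem hp
  have hpre : A ++ [p] <+: l := (List.prefix_append_right_inj A |>.2 (by simp)).trans
    (hAB ▸ l.dropLast_prefix)
  have hne : l ≠ [] := by rintro rfl; simp at hw
  have hlt : (A ++ [p]).length < l.length := by
    have h₁ : l.dropLast.length = A.length + 1 + B.length := by simp [hAB]; omega
    have h₂ : 0 < l.length := List.length_pos_iff.2 hne
    simp only [List.length_dropLast] at h₁
    simp only [List.length_append, List.length_singleton]
    omega
  exact (Nat.find_min hex (hlen ▸ hlt)) ⟨A ++ [p], p, hl.prefix hpre (by simp), by simp, hPp, rfl⟩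

lemma IsFanVertex.eq_or_adj (hu : IsFanVertex H k x y φ u) : u = y ∨ H.Adj x u := by
  obtain ⟨_ | ⟨y', t⟩, hl, hu⟩ := hu
  · simp at hu
  obtain rfl : y' = y := by simpa using hl.head?
  rcases List.mem_cons.1 (List.mem_of_getLast? hu) with rfl | hut
  · exact .inl rfl
  · exact .inr (adj_of_mem_tail_of_isChain_fanStep hl.isChain hut)

lemma IsFanVertex.exists_isFanVertex_color_eq (hu : IsFanVertex H k x y φ u)
    {δ : ℕ} (hδu : δ ∈ missing H k φ u) (hδx : δ ∉ missing H k φ x) :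
    ∃ w, IsFanVertex H k x y φ w ∧ H.Adj x w ∧ φ s(x, w) = δ := by
  obtain ⟨w, hxw, hw⟩ : ∃ w, H.Adj x w ∧ φ s(x, w) = δ := by
    by_contra! h
    exact hδx ⟨hδu.1, h⟩
  refine ⟨w, ?_, hxw, hw⟩
  obtain ⟨l, hl, hlu⟩ := hu
  by_cases hwl : w ∈ l
  · exact hl.isFanVertex_of_mem hwl
  have hne : l ≠ [] := by rintro rfl; simp at hlu
  refine ⟨l ++ [w], ⟨?_, ?_, ?_⟩, by simp⟩
  · rw [List.head?_append_of_ne_nil _ hne, hl.head?]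
  · exact List.concat_eq_append .. ▸ hl.nodup.concat hwl
  · refine hl.isChain.append (List.isChain_singleton w) ?_
    simp only [hlu, Option.mem_def, Option.some.injEq, List.head?_cons, forall_eq']
    exact ⟨hxw, hw ▸ hδu⟩

end Fan

section FanAnalysis

variable {V : Type*} [DecidableEq V] {G : SimpleGraph V} {k : ℕ} {x y u : V}
  {φ : Sym2 V → ℕ}

lemma notMem_missing_of_isFanVertex (hG : ¬ ∃ ψ, IsProperEdgeColoring G k ψ)
    (hφ : IsProperEdgeColoring (G.deleteEdges {s(x, y)}) k φ)
    (hu : IsFanVertex (G.deleteEdges {s(x, y)}) k x y φ u) {c : ℕ}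
    (hcx : c ∈ missing (G.deleteEdges {s(x, y)}) k φ x) :
    c ∉ missing (G.deleteEdges {s(x, y)}) k φ u := fun hcu =>
  let ⟨_, hl, hlu⟩ := hu
  hG (exists_isProperEdgeColoring_of_isFanSeq hφ hl hlu hcx hcu)

/-- If the `αδ`-chain through the end `z` of the fan missed `x`, swapping it would keep the fan
while making `α` missing at both `x` and `z`; `hstop` ensures that no step of the fan whose edge
is colored `δ` is broken by the swap. -/
lemma reachable_center_of_isFanSeq (hG : ¬ ∃ ψ, IsProperEdgeColoring G k ψ)
    (hφ : IsProperEdgeColoring (G.deleteEdges {s(x, y)}) k φ) {l : List V} {z : V}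
    (hl : IsFanSeq (G.deleteEdges {s(x, y)}) k x y φ l) (hz : l.getLast? = some z) {α δ : ℕ}
    (hα : α ∈ missing (G.deleteEdges {s(x, y)}) k φ x)
    (hδ : δ ∈ missing (G.deleteEdges {s(x, y)}) k φ z)
    (hstop : ∀ p ∈ l.dropLast, δ ∈ missing (G.deleteEdges {s(x, y)}) k φ p →
      (kempeGraph (G.deleteEdges {s(x, y)}) φ α δ).Reachable z p →
      (kempeGraph (G.deleteEdges {s(x, y)}) φ α δ).Reachable z x) :
    (kempeGraph (G.deleteEdges {s(x, y)}) φ α δ).Reachable z x := by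
  set G' := G.deleteEdges {s(x, y)}
  by_contra hzx
  have hψ := hφ.kempeSwap (z := z) hα.1 hδ.1
  have hψx : missing G' k (kempeSwap G' φ α δ z) x = missing G' k φ x :=
    missing_kempeSwap_of_not_reachable hzx
  have hαz : α ∈ missing G' k (kempeSwap G' φ α δ z) z := by
    rw [mem_missing_kempeSwap_iff .rfl hα.1 hδ.1, Equiv.swap_apply_left]
    exact hδ
  refine hG (exists_isProperEdgeColoring_of_isFanSeq hψ ⟨hl.head?, hl.nodup, ?_⟩ hz
    (hψx ▸ hα) hαz)
  refine hl.isChain.imp_of_mem_dropLast_imp fun p v hp hpv => ⟨hpv.1, ?_⟩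
  rw [kempeSwap_of_not_reachable v hzx]
  by_cases hzp : (kempeGraph G' φ α δ).Reachable z p
  · rw [mem_missing_kempeSwap_iff hzp hα.1 hδ.1]
    have hvα : φ s(x, v) ≠ α := hα.2 v hpv.1
    have hvδ : φ s(x, v) ≠ δ := fun h => hzx (hstop p hp (h ▸ hpv.2) hzp)
    rw [Equiv.swap_apply_of_ne_of_ne hvα hvδ]
    exact hpv.2
  · rw [missing_kempeSwap_of_not_reachable hzp]
    exact hpv.2

/-- If fan vertices `u ≠ v` both miss `δ`, let `r₁` end a shortest fan sequence whose last vertex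
misses `δ`, and `r₂` likewise with last vertex other than `r₁`. Both `αδ`-chains from `r₁` and `r₂`
reach `x`, but `x`, `r₁`, `r₂` have degree at most `1` in the `αδ`-subgraph, which has maximum
degree `2`. -/
lemma disjoint_missing_of_isFanVertex [Fintype V] (hxy : G.Adj x y)
    (hG : ¬ ∃ ψ, IsProperEdgeColoring G k ψ)
    (hφ : IsProperEdgeColoring (G.deleteEdges {s(x, y)}) k φ) {α : ℕ}
    (hα : α ∈ missing (G.deleteEdges {s(x, y)}) k φ x) {u v : V}
    (hu : IsFanVertex (G.deleteEdges {s(x, y)}) k x y φ u)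
    (hv : IsFanVertex (G.deleteEdges {s(x, y)}) k x y φ v) (huv : u ≠ v) :
    Disjoint (missing (G.deleteEdges {s(x, y)}) k φ u)
      (missing (G.deleteEdges {s(x, y)}) k φ v) := by
  classical
  set G' := G.deleteEdges {s(x, y)}
  refine Set.disjoint_left.2 fun δ hδu hδv => ?_
  set K := kempeGraph G' φ α δ
  obtain ⟨l₁, r₁, hl₁, hr₁, hδr₁, hmin₁⟩ :=
    exists_isFanSeq_forall_mem_dropLast_not (fun w => δ ∈ missing G' k φ w) ⟨u, hu, hδu⟩
  have hr₁x : K.Reachable r₁ x := reachable_center_of_isFanSeq hG hφ hl₁ hr₁ hα hδr₁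
    fun p hp hδp _ => absurd hδp (hmin₁ p hp)
  obtain ⟨l₂, r₂, hl₂, hr₂, ⟨hδr₂, hr₂r₁⟩, hmin₂⟩ :=
    exists_isFanSeq_forall_mem_dropLast_not (fun w => δ ∈ missing G' k φ w ∧ w ≠ r₁) <| by
      rcases eq_or_ne u r₁ with rfl | hur₁
      exacts [⟨v, hv, hδv, huv.symm⟩, ⟨u, hu, hδu, hur₁⟩]
  have hr₂x : K.Reachable r₂ x := reachable_center_of_isFanSeq hG hφ hl₂ hr₂ hα hδr₂
    fun p hp hδp hr₂p => by
      obtain rfl : p = r₁ := by_contra fun h => hmin₂ p hp ⟨hδp, h⟩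
      exact hr₂p.trans hr₁x
  have hxr : ∀ {r}, IsFanVertex G' k x y φ r → x ≠ r := fun hr =>
    (hr.eq_or_adj.elim (fun h => h ▸ hxy) (G.deleteEdges_le _ ·)).ne
  rcases eq_or_eq_or_eq_of_reachable_of_degree_le_one (hφ.degree_kempeGraph_le_two ·)
    (hφ.degree_kempeGraph_le_one_of_left hα) (hφ.degree_kempeGraph_le_one_of_right hδr₁)
    (hφ.degree_kempeGraph_le_one_of_right hδr₂) hr₁x.symm hr₂x.symm with h | h | h
  · exact hxr (hl₁.isFanVertex_of_mem (List.mem_of_getLast? hr₁)) h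
  · exact hxr (hl₂.isFanVertex_of_mem (List.mem_of_getLast? hr₂)) h
  · exact hr₂r₁ h.symm

/-- The missing sets of the fan vertices are disjoint, and each of their colors is the color of
an edge from `x` to a fan vertex other than `y`. -/
lemma sum_card_missingFinset_le [Fintype V] (hxy : G.Adj x y)
    (hG : ¬ ∃ ψ, IsProperEdgeColoring G k ψ)
    (hφ : IsProperEdgeColoring (G.deleteEdges {s(x, y)}) k φ) {α : ℕ}
    (hα : α ∈ missing (G.deleteEdges {s(x, y)}) k φ x) {S : Finset V}
    (hS : ∀ u, u ∈ S ↔ IsFanVertex (G.deleteEdges {s(x, y)}) k x y φ u) :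
    ∑ u ∈ S, #(missingFinset (G.deleteEdges {s(x, y)}) k φ u) ≤ #S - 1 := by
  set G' := G.deleteEdges {s(x, y)}
  have hdisj : (S : Set V).PairwiseDisjoint (missingFinset G' k φ) := fun u hu v hv huv =>
    disjoint_left.2 fun c hcu hcv => Set.disjoint_left.1
      (disjoint_missing_of_isFanVertex hxy hG hφ hα ((hS u).1 hu) ((hS v).1 hv) huv)
      (mem_missingFinset.1 hcu) (mem_missingFinset.1 hcv)
  have hsub : S.biUnion (missingFinset G' k φ) ⊆ (S.erase y).image fun w => φ s(x, w) := by
    intro δ hδ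
    obtain ⟨u, hu, hδu⟩ := mem_biUnion.1 hδ
    have hδu := mem_missingFinset.1 hδu
    obtain ⟨w, hw, hxw, rfl⟩ := ((hS u).1 hu).exists_isFanVertex_color_eq hδu
      fun hδx => notMem_missing_of_isFanVertex hG hφ ((hS u).1 hu) hδx hδu
    have hwy : w ≠ y := by rintro rfl; simp [G'] at hxw
    exact mem_image.2 ⟨w, mem_erase.2 ⟨hwy, (hS w).2 hw⟩, rfl⟩
  calc ∑ u ∈ S, #(missingFinset G' k φ u)
      = #(S.biUnion (missingFinset G' k φ)) := (card_biUnion hdisj).symm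
    _ ≤ #((S.erase y).image fun w => φ s(x, w)) := card_le_card hsub
    _ ≤ #(S.erase y) := card_image_le
    _ = #S - 1 := card_erase_of_mem ((hS y).2 isFanVertex_root)

end FanAnalysis

/-- **Vizing's Adjacency Lemma.** If `G` is Class 2 and `e = xy` is a
critical edge, then `x` has at least `Δ - d_G(y) + 1` neighbors of degree `Δ`
in `V(G) \ {y}`. -/
theorem vizing_adjacency_lemma {V : Type*} [Fintype V] [DecidableEq V]
    (G : SimpleGraph V) [DecidableRel G.Adj]
    (hClass2 : chromIndex G = G.maxDegree + 1)
    (x y : V) (hxy : G.Adj x y)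
    (hcritical : chromIndex (G.deleteEdges {s(x, y)}) < chromIndex G) :
    G.maxDegree - G.degree y + 1 ≤
      ((G.neighborFinset x).filter fun z => z ≠ y ∧ G.degree z = G.maxDegree).card := by
  classical
  have hG : ¬ ∃ ψ, IsProperEdgeColoring G G.maxDegree ψ := fun ⟨ψ, hψ⟩ => by
    have := chromIndex_le hψ
    omega
  obtain ⟨φ, hφ⟩ := exists_isProperEdgeColoring_chromIndex (G.deleteEdges {s(x, y)})
  replace hφ := hφ.mono (k' := G.maxDegree) (by omega)
  obtain ⟨α, hα⟩ := nonempty_missingFinset_of_degree_lt (φ := φ)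
    ((degree_deleteEdges_lt hxy (Sym2.mem_mk_left x y)).trans_le (G.degree_le_maxDegree x))
  set S := univ.filter (IsFanVertex (G.deleteEdges {s(x, y)}) G.maxDegree x y φ)
  have hyS : y ∈ S := by simp [S, isFanVertex_root]
  have hcount := le_card_filter_erase_of_sum_le hyS _ (G.degree · = G.maxDegree)
    (sum_card_missingFinset_le hxy hG hφ (mem_missingFinset.1 hα) (by simp [S]))
    fun u _ hu => card_pos.2 <| nonempty_missingFinset_of_degree_lt <|
      (degree_le_of_le (G.deleteEdges_le _)).trans_lt ((G.degree_le_maxDegree u).lt_of_ne hu)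
  refine (sub_degree_add_one_le_card_missingFinset hxy (G.degree_le_maxDegree y)).trans
    (hcount.trans (card_le_card fun u hu => ?_))
  obtain ⟨⟨huy, huS⟩, hu⟩ := by simpa [S] using hu
  simpa [huy, hu] using (huS.eq_or_adj.resolve_left huy).1
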